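/- Let K be a field of characteristic 0 and let t ∈ K satisfy t² = 2t + 4. Then the Weierstrass curves C_{25,1}(t,1), C_{25,2}(t,1), C_{25,3}(t,1) all have nonzero discriminant, the j-invariant of C_{25,2}(t,1) equals 1728, and the j-invariants of C_{25,1}(t,1) and C_{25,3}(t,1) are both equal to 9845745509376·t + 12170004103872. -/

import Mathlib

noncomputable section

/-- The polynomial `S2`. -/
def S2 {K : Type*} [Field K] (t : K) : K := t ^ 2 + 4

/-- The polynomial `S4`. -/
def S4 {K : Type*} [Field K] (t : K) : K := t ^ 10 + 240 * t ^ 9 + 2170 * t ^ 8 + 8880 * t ^ 7 + 34835 * t ^ 6 + 83748 * t ^ 5 + 206210 * t ^ 4 + 313380 * t ^ 3 + 503545 * t ^ 2 + 424740 * t + 375376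

/-- The polynomial `S5`. -/
def S5 {K : Type*} [Field K] (t : K) : K := t ^ 4 + 6 * t ^ 3 + 21 * t ^ 2 + 36 * t + 61

/-- The polynomial `S6`. -/
def S6 {K : Type*} [Field K] (t : K) : K := t ^ 10 - 510 * t ^ 9 - 13580 * t ^ 8 - 36870 * t ^ 7 - 190915 * t ^ 6 - 393252 * t ^ 5 - 1068040 * t ^ 4 - 1508370 * t ^ 3 - 2581955 * t ^ 2 - 2087010 * t - 1885124

/-- The polynomial `S7`. -/
def S7 {K : Type*} [Field K] (t : K) : K := t ^ 10 + 10 * t ^ 8 + 35 * t ^ 6 - 12 * t ^ 5 + 50 * t ^ 4 - 60 * t ^ 3 + 25 * t ^ 2 - 60 * t + 16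

/-- The polynomial `S8`. -/
def S8 {K : Type*} [Field K] (t : K) : K := t ^ 4 + 3 * t ^ 2 + 1

/-- The polynomial `S9`. -/
def S9 {K : Type*} [Field K] (t : K) : K := t ^ 10 + 10 * t ^ 8 + 35 * t ^ 6 - 18 * t ^ 5 + 50 * t ^ 4 - 90 * t ^ 3 + 25 * t ^ 2 - 90 * t + 76

/-- The polynomial `S10`. -/
def S10 {K : Type*} [Field K] (t : K) : K := t ^ 2 + 3 * t + 1

/-- The polynomial `S11`. -/
def S11 {K : Type*} [Field K] (t : K) : K := t ^ 4 - 4 * t ^ 3 + 11 * t ^ 2 - 14 * t + 31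

/-- The polynomial `S12`. -/
def S12 {K : Type*} [Field K] (t : K) : K := t ^ 4 + t ^ 3 + 11 * t ^ 2 - 4 * t + 16

/-- The polynomial `S13`. -/
def S13 {K : Type*} [Field K] (t : K) : K := t ^ 2 - 2 * t - 4

/-- The polynomial `S14`. -/
def S14 {K : Type*} [Field K] (t : K) : K := t ^ 4 - 4 * t ^ 3 + 21 * t ^ 2 - 34 * t + 41

/-- The curve `C_{25,1}(t,d)`. -/
def C251 {K : Type*} [Field K] (t d : K) : WeierstrassCurve K :=
  { a₁ := 0, a₂ := 0, a₃ := 0,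
    a₄ := -27 * d ^ 2 * S2 t * S4 t,
    a₆ := -54 * d ^ 3 * S2 t ^ 2 * S5 t * S6 t }

/-- The curve `C_{25,2}(t,d)`. -/
def C252 {K : Type*} [Field K] (t d : K) : WeierstrassCurve K :=
  { a₁ := 0, a₂ := 0, a₃ := 0,
    a₄ := -16875 * d ^ 2 * S2 t * S10 t * S11 t * S12 t,
    a₆ := -843750 * d ^ 3 * S2 t ^ 2 * S5 t * S8 t * S13 t * S14 t }

/-- The curve `C_{25,3}(t,d)`. -/
def C253 {K : Type*} [Field K] (t d : K) : WeierstrassCurve K :=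
  { a₁ := 0, a₂ := 0, a₃ := 0,
    a₄ := -10546875 * d ^ 2 * S2 t * S7 t,
    a₆ := -13183593750 * d ^ 3 * S2 t ^ 2 * S8 t * S9 t }

/-!
The parameter `t = 1 ± √5` is a root of `S₁₃`, so `a₆(C_{25,2}(t,1)) = 0` and hence `j = 1728`.
At this `t` one also has `S₄ = 625 S₇` and `S₅ S₆ = -15625 S₈ S₉`, which make `C_{25,3}(t,1)` the
quadratic twist of `C_{25,1}(t,1)` by `-25` (`a₄ ↦ 25² a₄`, `a₆ ↦ (-25)³ a₆`); twisting scales `c₄³`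
and `Δ` by the same factor `25⁶`, so the two curves share their `j`-invariant. The remaining values
are computed in `ℚ(t) = ℚ(√5)`, where `a + bt ≠ 0` as soon as its norm `a² + 2ab - 4b²` is nonzero.
-/

namespace WeierstrassCurve

variable {K : Type*} [Field K]

section ShortNF

variable (W : WeierstrassCurve K) [W.IsShortNF]

theorem Δ_of_a₆_eq_zero (h₆ : W.a₆ = 0) : W.Δ = -2 ^ 6 * W.a₄ ^ 3 := by
  rw [Δ_of_isShortNF, h₆]
  ring

theorem Δ_ne_zero_of_a₆_eq_zero [NeZero (2 : K)] (h₆ : W.a₆ = 0) (h₄ : W.a₄ ≠ 0) : W.Δ ≠ 0 := by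
  rw [W.Δ_of_a₆_eq_zero h₆]
  exact mul_ne_zero (neg_ne_zero.mpr (pow_ne_zero _ two_ne_zero)) (pow_ne_zero _ h₄)

theorem c₄_pow_three_div_Δ_of_a₆_eq_zero [NeZero (2 : K)] (h₆ : W.a₆ = 0) (h₄ : W.a₄ ≠ 0) :
    W.c₄ ^ 3 / W.Δ = 1728 := by
  rw [div_eq_iff (W.Δ_ne_zero_of_a₆_eq_zero h₆ h₄), W.Δ_of_a₆_eq_zero h₆, c₄_of_isShortNF]
  ring

end ShortNF

section Twist

variable {W W' : WeierstrassCurve K} [W.IsShortNF] [W'.IsShortNF] {u : K}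

theorem Δ_of_twist (h₄ : W'.a₄ = u ^ 2 * W.a₄) (h₆ : W'.a₆ = u ^ 3 * W.a₆) :
    W'.Δ = u ^ 6 * W.Δ := by
  rw [Δ_of_isShortNF, Δ_of_isShortNF, h₄, h₆]
  ring

theorem c₄_pow_three_div_Δ_of_twist (hu : u ≠ 0) (h₄ : W'.a₄ = u ^ 2 * W.a₄)
    (h₆ : W'.a₆ = u ^ 3 * W.a₆) : W'.c₄ ^ 3 / W'.Δ = W.c₄ ^ 3 / W.Δ := by
  rw [Δ_of_twist h₄ h₆, c₄_of_isShortNF, c₄_of_isShortNF, h₄,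
    show (-48 * (u ^ 2 * W.a₄)) ^ 3 = u ^ 6 * (-48 * W.a₄) ^ 3 by ring,
    mul_div_mul_left _ _ (pow_ne_zero 6 hu)]

end Twist

end WeierstrassCurve

section

variable {K : Type*} [Field K] {t : K}

-- `a + 2b - bt` is the conjugate of `a + bt` in `ℚ(√5) = ℚ(t)`, and their product is the norm.
theorem add_mul_ne_zero_of_norm_ne_zero (ht : t ^ 2 = 2 * t + 4) {a b : K}
    (hN : a ^ 2 + 2 * a * b - 4 * b ^ 2 ≠ 0) : a + b * t ≠ 0 := by
  intro h
  exact hN (by linear_combination (a + 2 * b - b * t) * h + b ^ 2 * ht)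

instance (t d : K) : (C251 t d).IsShortNF := ⟨rfl, rfl, rfl⟩
instance (t d : K) : (C252 t d).IsShortNF := ⟨rfl, rfl, rfl⟩
instance (t d : K) : (C253 t d).IsShortNF := ⟨rfl, rfl, rfl⟩

theorem S13_eq_zero (ht : t ^ 2 = 2 * t + 4) : S13 t = 0 := by
  rw [S13]
  linear_combination ht

theorem C252_a₆_eq_zero (ht : t ^ 2 = 2 * t + 4) (d : K) : (C252 t d).a₆ = 0 := by
  simp only [C252, S13_eq_zero ht, mul_zero, zero_mul]

theorem C252_a₄ (ht : t ^ 2 = 2 * t + 4) :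
    (C252 t 1).a₄ = -27843750000 + -22781250000 * t := by
  simp only [C252, S2, S10, S11, S12]
  grind

theorem C252_a₄_ne_zero [CharZero K] (ht : t ^ 2 = 2 * t + 4) : (C252 t 1).a₄ ≠ 0 := by
  rw [C252_a₄ ht]
  exact add_mul_ne_zero_of_norm_ne_zero ht (by norm_num)

theorem C251_a₄ (ht : t ^ 2 = 2 * t + 4) : (C251 t 1).a₄ = -19322550000 - 15588450000 * t := by
  simp only [C251, S2, S4]
  grind

theorem C251_a₆ (ht : t ^ 2 = 2 * t + 4) :
    (C251 t 1).a₆ = 1960572600000000 + 1586012400000000 * t := by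
  simp only [C251, S2, S5, S6]
  grind

theorem C251_Δ (ht : t ^ 2 = 2 * t + 4) :
    (C251 t 1).Δ = 233834040000000000000000 + 191318760000000000000000 * t := by
  rw [WeierstrassCurve.Δ_of_isShortNF, C251_a₄ ht, C251_a₆ ht]
  grind

theorem C251_Δ_ne_zero [CharZero K] (ht : t ^ 2 = 2 * t + 4) : (C251 t 1).Δ ≠ 0 := by
  rw [C251_Δ ht]
  exact add_mul_ne_zero_of_norm_ne_zero ht (by norm_num)

theorem C251_c₄_pow_three_div_Δ [CharZero K] (ht : t ^ 2 = 2 * t + 4) :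
    (C251 t 1).c₄ ^ 3 / (C251 t 1).Δ = 9845745509376 * t + 12170004103872 := by
  rw [div_eq_iff (C251_Δ_ne_zero ht), WeierstrassCurve.c₄_of_isShortNF, C251_a₄ ht, C251_Δ ht]
  grind

theorem C253_a₄ (ht : t ^ 2 = 2 * t + 4) (d : K) :
    (C253 t d).a₄ = (-25) ^ 2 * (C251 t d).a₄ := by
  simp only [C251, C253, S4, S7]
  grind

theorem C253_a₆ (ht : t ^ 2 = 2 * t + 4) (d : K) :
    (C253 t d).a₆ = (-25) ^ 3 * (C251 t d).a₆ := by
  simp only [C251, C253, S5, S6, S8, S9]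
  grind

end

theorem stmt12 {K : Type*} [Field K] [CharZero K] (t : K) (ht : t ^ 2 = 2 * t + 4) :
    (C251 t 1).Δ ≠ 0 ∧ (C252 t 1).Δ ≠ 0 ∧ (C253 t 1).Δ ≠ 0 ∧
    (C252 t 1).c₄ ^ 3 / (C252 t 1).Δ = 1728 ∧
    (C251 t 1).c₄ ^ 3 / (C251 t 1).Δ = 9845745509376 * t + 12170004103872 ∧
    (C253 t 1).c₄ ^ 3 / (C253 t 1).Δ = 9845745509376 * t + 12170004103872 := by
  have hΔ₁ := C251_Δ_ne_zero ht
  have h₆₂ := C252_a₆_eq_zero ht 1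
  have h₄ := C253_a₄ ht 1
  have h₆ := C253_a₆ ht 1
  refine ⟨hΔ₁, (C252 t 1).Δ_ne_zero_of_a₆_eq_zero h₆₂ (C252_a₄_ne_zero ht), ?_,
    (C252 t 1).c₄_pow_three_div_Δ_of_a₆_eq_zero h₆₂ (C252_a₄_ne_zero ht),
    C251_c₄_pow_three_div_Δ ht, ?_⟩
  · rw [WeierstrassCurve.Δ_of_twist h₄ h₆]
    exact mul_ne_zero (by norm_num) hΔ₁
  · rw [WeierstrassCurve.c₄_pow_three_div_Δ_of_twist (by norm_num) h₄ h₆,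
      C251_c₄_pow_three_div_Δ ht]
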